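/- arXiv:2002.06930 — 2 statements merged into one kernel-verified Lean document; each statement's English description precedes it below -/
import Mathlib

section
/- For every n ≥ 2, the type B Eulerian polynomials satisfy the identity of polynomials in x: B_n(x) = (1+x)^n + Σ_{k=0}^{n-2} C(n,k) · B_k(x) · (x + x² + ⋯ + x^{n-1-k}) · 2^{n-k}. -/
open scoped Classical
open Finset

noncomputable section

/-- 1-based value of a permutation of `Fin n` at position `k ∈ [1,n]`; `0` elsewhere. -/
def permVal {n : ℕ} (π : Equiv.Perm (Fin n)) (k : ℕ) : ℕ :=
  if h : 1 ≤ k ∧ k ≤ n then (π ⟨k - 1, by omega⟩).val + 1 else 0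

/-- number of descents -/
def desNum {n : ℕ} (π : Equiv.Perm (Fin n)) : ℕ :=
  ((Finset.Icc 1 (n - 1)).filter fun i => permVal π (i + 1) < permVal π i).card

/-- number of ascents -/
def ascNum {n : ℕ} (π : Equiv.Perm (Fin n)) : ℕ :=
  ((Finset.Icc 1 (n - 1)).filter fun i => permVal π i < permVal π (i + 1)).card

/-- number of big ascents -/
def bascNum {n : ℕ} (π : Equiv.Perm (Fin n)) : ℕ :=
  ((Finset.Icc 1 (n - 1)).filter fun i => permVal π i + 2 ≤ permVal π (i + 1)).card

/-- number of successions -/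
def sucNum {n : ℕ} (π : Equiv.Perm (Fin n)) : ℕ :=
  ((Finset.Icc 1 (n - 1)).filter fun i => permVal π (i + 1) = permVal π i + 1).card

/-- number of excedances -/
def excNum {n : ℕ} (π : Equiv.Perm (Fin n)) : ℕ :=
  ((Finset.Icc 1 n).filter fun i => i < permVal π i).card

/-- number of anti-excedances -/
def aexcNum {n : ℕ} (π : Equiv.Perm (Fin n)) : ℕ :=
  ((Finset.Icc 1 n).filter fun i => permVal π i < i).card

/-- number of fixed points -/
def fixNum {n : ℕ} (π : Equiv.Perm (Fin n)) : ℕ :=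
  ((Finset.Icc 1 n).filter fun i => permVal π i = i).card

/-- number of cycles (counted as number of cycle minima) -/
def cycNum {n : ℕ} (π : Equiv.Perm (Fin n)) : ℕ :=
  ((Finset.Icc 1 n).filter fun i => ∀ m : ℕ, i ≤ (permVal π)^[m] i).card

/-- number of left peaks (with the convention π(0)=0) -/
def lpkNum {n : ℕ} (π : Equiv.Perm (Fin n)) : ℕ :=
  ((Finset.Icc 1 (n - 1)).filter fun i =>
    permVal π (i - 1) < permVal π i ∧ permVal π (i + 1) < permVal π i).card

/-- `π` has no cycle double ascents. -/
def CdaFree {n : ℕ} (π : Equiv.Perm (Fin n)) : Prop :=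
  ∀ v ∈ Finset.Icc 1 n, ¬ (permVal π⁻¹ v < v ∧ v < permVal π v)

/-- value at `v` of the permutation of `[n-k]` obtained from `π` by removing
the `k` largest letters: `π^m(v)` for the least `m ≥ 1` with `π^m(v) ≤ n-k`. -/
def removeVal {n : ℕ} (π : Equiv.Perm (Fin n)) (k v : ℕ) : ℕ :=
  permVal (π ^ (WithTop.untopD 1
    (((Finset.Icc 1 n).filter fun m => permVal (π ^ m) v ≤ n - k).min))) v

/-- simsun permutation of the second kind -/
def Simsun2 {n : ℕ} (π : Equiv.Perm (Fin n)) : Prop :=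
  ∀ k ≤ n, ∀ v ∈ Finset.Icc 1 (n - k),
    ¬ (removeVal π⁻¹ k v < v ∧ v < removeVal π k v)

/-- Eulerian polynomial -/
def EulerA (n : ℕ) (x : ℝ) : ℝ := ∑ π : Equiv.Perm (Fin n), x ^ desNum π

/-- derangement polynomial -/
def dpoly (n : ℕ) (x : ℝ) : ℝ :=
  ∑ π ∈ (Finset.univ : Finset (Equiv.Perm (Fin n))).filter (fun π => fixNum π = 0),
    x ^ excNum π

/-- `A_n(x,y,s) = Σ_π x^basc(π) y^des(π) s^suc(π)` -/
def Apoly (n : ℕ) (x y s : ℝ) : ℝ :=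
  ∑ π : Equiv.Perm (Fin n), x ^ bascNum π * y ^ desNum π * s ^ sucNum π

/- ### Signed permutations -/

/-- 1-based (integer) value of a signed permutation encoded as `σ : Fin n → Fin n × Bool`,
where the `Bool` records a negative sign. -/
def bval {n : ℕ} (σ : Fin n → Fin n × Bool) (k : ℕ) : ℤ :=
  if h : 1 ≤ k ∧ k ≤ n then
    (if (σ ⟨k - 1, by omega⟩).2 then -(((σ ⟨k - 1, by omega⟩).1 : ℤ) + 1)
     else ((σ ⟨k - 1, by omega⟩).1 : ℤ) + 1)
  else 0

/-- The hyperoctahedral group `B_n`: signed permutations of order `n`, encoded as maps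
`Fin n → Fin n × Bool` whose first component is injective. -/
def BPerms (n : ℕ) : Finset (Fin n → Fin n × Bool) :=
  Finset.univ.filter fun σ => Function.Injective fun i => (σ i).1

/-- type B excedances: positions `i` with `σ(|σ(i)|) > σ(i)` -/
def bexcNum {n : ℕ} (σ : Fin n → Fin n × Bool) : ℕ :=
  ((Finset.Icc 1 n).filter fun i => bval σ i < bval σ (bval σ i).natAbs).card

/-- type B anti-excedances: positions `i` with `σ(|σ(i)|) < σ(i)` -/
def baexcNum {n : ℕ} (σ : Fin n → Fin n × Bool) : ℕ :=
  ((Finset.Icc 1 n).filter fun i => bval σ (bval σ i).natAbs < bval σ i).card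

/-- fixed points: `σ(i) = i` -/
def bfixNum {n : ℕ} (σ : Fin n → Fin n × Bool) : ℕ :=
  ((Finset.Icc 1 n).filter fun i => bval σ i = (i : ℤ)).card

/-- singletons: `σ(i) = -i` -/
def bstNum {n : ℕ} (σ : Fin n → Fin n × Bool) : ℕ :=
  ((Finset.Icc 1 n).filter fun i => bval σ i = -(i : ℤ)).card

/-- number of negative entries -/
def bnegNum {n : ℕ} (σ : Fin n → Fin n × Bool) : ℕ :=
  ((Finset.Icc 1 n).filter fun i => bval σ i < 0).card

/-- number of cycles of the permutation `i ↦ |σ(i)|` of `[n]` -/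
def bcycNum {n : ℕ} (σ : Fin n → Fin n × Bool) : ℕ :=
  ((Finset.Icc 1 n).filter fun i => ∀ m : ℕ, i ≤ (fun k => (bval σ k).natAbs)^[m] i).card

/-- weak excedances: `σ(i) = i` or `σ(|σ(i)|) > σ(i)` -/
def bwexcNum {n : ℕ} (σ : Fin n → Fin n × Bool) : ℕ :=
  ((Finset.Icc 1 n).filter fun i =>
    bval σ i = (i : ℤ) ∨ bval σ i < bval σ (bval σ i).natAbs).card

/-- `B_n(x,y,s,t,p,q)` -/
def Bpoly (n : ℕ) (x y s t p q : ℝ) : ℝ :=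
  ∑ σ ∈ BPerms n, x ^ bexcNum σ * y ^ baexcNum σ * s ^ bfixNum σ *
    t ^ bstNum σ * p ^ bcycNum σ * q ^ bnegNum σ


/-- type B Eulerian polynomial `B_n(x) = Σ_{σ ∈ B_n} x^wexc(σ)` -/
def BEuler (n : ℕ) (x : ℝ) : ℝ := ∑ σ ∈ BPerms n, x ^ bwexcNum σ

namespace S15
open Polynomial

def geo (r : ℕ) : Polynomial ℝ := ∑ m ∈ Finset.Icc 1 r, X ^ m

lemma geo_zero : geo 0 = 0 := by simp [geo]
lemma geo_succ (r : ℕ) : geo (r+1) = geo r + X ^ (r+1) := by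
  rw [geo, geo, ← Finset.sum_Icc_succ_top (by omega)]

lemma key (q : ℕ) : X * (1 - X) * derivative (geo q) = geo q - (q : Polynomial ℝ) * X ^ (q+1) := by
  induction q with
  | zero => simp [geo_zero]
  | succ q ih =>
    rw [geo_succ, derivative_add, mul_add, ih, derivative_X_pow, Polynomial.C_eq_natCast]
    push_cast; ring

lemma GEO (r : ℕ) (hr : 1 ≤ r) :
    geo r = (r : Polynomial ℝ) * (X * geo (r-1)) + X * (1 - X) * derivative (geo (r-1))
      - (r : Polynomial ℝ) * (X * geo (r-2)) + (if r = 1 then X else 0) := by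
  match r, hr with
  | 1, _ => simp [geo_zero, geo_succ]
  | (t+2), _ =>
    have h1 : t+2-1 = t+1 := rfl
    have h2 : t+2-2 = t := rfl
    rw [h1, h2, key, if_neg (by omega), geo_succ (t+1), geo_succ t]
    push_cast; ring

/-- the coefficient polynomials -/
def A (m k : ℕ) : Polynomial ℝ := (m.choose k : Polynomial ℝ) * geo (m-1-k) * 2^(m-k)

lemma A_self (m : ℕ) : A m m = 0 := by
  have h : m - 1 - m = 0 := by omega
  simp [A, h, geo_zero]

lemma geo_one : geo 1 = X := by simp [geo]

lemma A_derivative (m k : ℕ) :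
    derivative (A m k) = (m.choose k : Polynomial ℝ) * derivative (geo (m-1-k)) * 2^(m-k) := by
  have h2 : ((2:Polynomial ℝ))^(m-k) = ((2^(m-k) : ℕ) : Polynomial ℝ) := by push_cast; ring
  rw [A, h2, derivative_mul, derivative_mul, derivative_natCast, derivative_natCast]
  ring

lemma CI (M j : ℕ) (hj : j ≤ M) :
    A (M+2) j = 2*((M+1-j : ℕ) : Polynomial ℝ) * X * A (M+1) j
      + 2*(X*(1-X)*derivative (A (M+1) j))
      + (if j = 0 then 0 else A (M+1) (j-1))
      + (if j = M then 4*((M:Polynomial ℝ)+1)*X else 0)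
      - 4*((M:Polynomial ℝ)+1)*(X*(A M j)) := by
  obtain ⟨r, hr, hr1⟩ : ∃ r, M+1-j = r ∧ 1 ≤ r := ⟨M+1-j, rfl, by omega⟩
  have e1 : M+2-1-j = r := by omega
  have e2 : M+2-j = r+1 := by omega
  have e3 : M+1-1-j = r-1 := by omega
  have e5 : M-1-j = r-2 := by omega
  have e6 : M-j = r-1 := by omega
  have hB : ((M:Polynomial ℝ)+1) * (M.choose j : Polynomial ℝ)
      = (r : Polynomial ℝ) * ((M+1).choose j : Polynomial ℝ) := by
    have h1 : (M+1) * M.choose j = r * (M+1).choose j := by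
      have h2 := Nat.add_one_mul_choose_eq M j
      have h3 := Nat.choose_succ_right_eq (M+1) j
      rw [hr] at h3
      calc (M+1) * M.choose j = (M+1).choose (j+1) * (j+1) := h2
        _ = (M+1).choose j * r := h3
        _ = r * (M+1).choose j := Nat.mul_comm _ _
    have := congrArg (Nat.cast : ℕ → Polynomial ℝ) h1
    push_cast at this
    linear_combination this
  rw [A_derivative]
  unfold A
  rw [e1, e2, e3, hr, e5, e6]
  have h4 : (2:Polynomial ℝ)^(r+1) = 4 * 2^(r-1) := by
    conv_lhs => rw [show r+1 = (r-1)+2 by omega]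
    rw [pow_add]; ring
  have h2 : (2:Polynomial ℝ)^r = 2 * 2^(r-1) := by
    conv_lhs => rw [show r = (r-1)+1 by omega]
    rw [pow_succ]; ring
  by_cases h0 : j = 0
  · subst h0
    rw [if_pos rfl]
    by_cases h1 : r = 1
    · have hM0 : M = 0 := by omega
      subst hM0
      subst h1
      rw [if_pos rfl]
      norm_num [geo_zero, geo_one]
      ring
    · rw [if_neg (show ¬(0 = M) by omega)]
      rw [GEO r hr1, if_neg h1, h4, h2]
      norm_num at hB ⊢
      linear_combination (4 * X * geo (r-2) * (2:Polynomial ℝ)^(r-1)) * hB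
  · rw [if_neg h0]
    have hP : (((M+2).choose j : ℕ) : Polynomial ℝ)
        = ((M+1).choose j : Polynomial ℝ) + ((M+1).choose (j-1) : Polynomial ℝ) := by
      have h5 : (M+2).choose j = (M+1).choose (j-1) + (M+1).choose j := by
        obtain ⟨j', rfl⟩ : ∃ j', j = j'+1 := ⟨j-1, by omega⟩
        simpa using Nat.choose_succ_succ (M+1) j'
      rw [h5]; push_cast; ring
    have e7 : M+1-1-(j-1) = r := by omega
    have e8 : M+1-(j-1) = r+1 := by omega
    rw [e7, e8]
    by_cases h1 : r = 1
    · have hjM : j = M := by omega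
      subst hjM
      rw [if_pos rfl]
      subst h1
      have hC : (((j+1).choose j : ℕ) : Polynomial ℝ) = (j:Polynomial ℝ)+1 := by
        rw [Nat.choose_succ_self_right]; push_cast; ring
      norm_num [geo_zero, geo_one]
      linear_combination (4*X) * hP + (4*X) * hC
    · rw [if_neg (show ¬ j = M by omega)]
      rw [GEO r hr1, if_neg h1, h4, h2, hP]
      linear_combination (4 * X * geo (r-2) * (2:Polynomial ℝ)^(r-1)) * hB

lemma A_pred (m : ℕ) : A (m+1) m = 0 := by
  have h : (m+1) - 1 - m = 0 := by omega
  simp [A, h, geo_zero]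

section Induction
variable (Q : ℕ → Polynomial ℝ)

theorem goal_all
    (hrec : ∀ m : ℕ, Q (m+1)
      = (1 + (2*(m:Polynomial ℝ)+1)*X) * Q m + 2*(X*(1-X)* derivative (Q m)))
    (hQ0 : Q 0 = 1) :
    ∀ n, Q n = (1+X)^n + ∑ k ∈ Finset.range n, A n k * Q k := by
  intro n
  induction n using Nat.strong_induction_on with
  | _ n IH =>
    match n with
    | 0 => simpa using hQ0
    | 1 =>
      rw [hrec 0, hQ0]
      simp [A_pred 0]
    | (M+2) =>
      have H1 : Q (M+1) = (1+X)^(M+1) + ∑ k ∈ Finset.range (M+1), A (M+1) k * Q k :=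
        IH (M+1) (by omega)
      have H2 : Q M = (1+X)^M + ∑ k ∈ Finset.range (M+1), A M k * Q k := by
        rw [IH M (by omega), Finset.sum_range_succ, A_self, zero_mul, add_zero]
      have key : ∀ k : ℕ, 2*(X*(1-X)* derivative (Q k))
          = Q (k+1) - (1 + (2*(k:Polynomial ℝ)+1)*X) * Q k := by
        intro k
        linear_combination (-1 : Polynomial ℝ) * hrec k
      -- derivative of H1's RHS
      have hD : derivative ((1+X)^(M+1) + ∑ k ∈ Finset.range (M+1), A (M+1) k * Q k)
          = ((M:Polynomial ℝ)+1)*(1+X)^M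
            + (∑ k ∈ Finset.range (M+1), derivative (A (M+1) k) * Q k
              + ∑ k ∈ Finset.range (M+1), A (M+1) k * derivative (Q k)) := by
        rw [derivative_add, derivative_sum]
        congr 1
        · rw [derivative_pow]
          simp only [derivative_add, derivative_one, derivative_X, zero_add, mul_one,
            Nat.add_sub_cancel, Polynomial.C_eq_natCast]
          push_cast; ring
        · rw [← Finset.sum_add_distrib]
          exact Finset.sum_congr rfl fun k _ => derivative_mul
      have hA : Q (M+2) = (1 + (2*((M:Polynomial ℝ)+1)+1)*X)
            * ((1+X)^(M+1) + ∑ k ∈ Finset.range (M+1), A (M+1) k * Q k)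
          + 2*(X*(1-X)*(((M:Polynomial ℝ)+1)*(1+X)^M
            + (∑ k ∈ Finset.range (M+1), derivative (A (M+1) k) * Q k
              + ∑ k ∈ Finset.range (M+1), A (M+1) k * derivative (Q k)))) := by
        have := hrec (M+1)
        rw [H1, hD] at this
        convert this using 3
        push_cast; ring
      -- sum over range (M+1) of A (M+1) k * derivative (Q k), times 2X(1-X)
      have hkeysum : 2*(X*(1-X)* ∑ k ∈ Finset.range (M+1), A (M+1) k * derivative (Q k))
          = (∑ k ∈ Finset.range (M+1), A (M+1) k * Q (k+1))
            - ∑ k ∈ Finset.range (M+1), (1 + (2*(k:Polynomial ℝ)+1)*X) * (A (M+1) k * Q k) := by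
        rw [Finset.mul_sum, Finset.mul_sum, ← Finset.sum_sub_distrib]
        refine Finset.sum_congr rfl fun k _ => ?_
        linear_combination (A (M+1) k) * key k
      -- the target sum, rewritten by CI
      have hT : ∑ j ∈ Finset.range (M+2), A (M+2) j * Q j
          = ((∑ k ∈ Finset.range (M+1), (1 + (2*((M:Polynomial ℝ)+1)+1)*X) * (A (M+1) k * Q k))
              - ∑ k ∈ Finset.range (M+1), (1 + (2*(k:Polynomial ℝ)+1)*X) * (A (M+1) k * Q k))
            + 2*(X*(1-X)* ∑ k ∈ Finset.range (M+1), derivative (A (M+1) k) * Q k)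
            + (∑ k ∈ Finset.range (M+1), A (M+1) k * Q (k+1))
            + 4*((M:Polynomial ℝ)+1)*X*(Q M)
            - 4*((M:Polynomial ℝ)+1)*X*(∑ k ∈ Finset.range (M+1), A M k * Q k) := by
        rw [Finset.sum_range_succ, A_pred, zero_mul, add_zero]
        have step2 : ∑ j ∈ Finset.range (M+1), A (M+2) j * Q j
            = ∑ j ∈ Finset.range (M+1),
              (((1 + (2*((M:Polynomial ℝ)+1)+1)*X) * (A (M+1) j * Q j)
                  - (1 + (2*(j:Polynomial ℝ)+1)*X) * (A (M+1) j * Q j))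
                + 2*(X*(1-X)* (derivative (A (M+1) j) * Q j))
                + (if j = 0 then 0 else A (M+1) (j-1)) * Q j
                + (if j = M then 4*((M:Polynomial ℝ)+1)*X else 0) * Q j
                - 4*((M:Polynomial ℝ)+1)*X*(A M j * Q j)) := by
          refine Finset.sum_congr rfl fun j hj => ?_
          have hjM : j ≤ M := by
            have := Finset.mem_range.mp hj; omega
          rw [CI M j hjM]
          have hc : ((M+1-j : ℕ) : Polynomial ℝ) = (M:Polynomial ℝ)+1-(j:Polynomial ℝ) := by
            have : ((M+1-j : ℕ) : Polynomial ℝ) = ((M+1 : ℕ) : Polynomial ℝ) - (j:Polynomial ℝ) :=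
              by exact_mod_cast Nat.cast_sub (by omega)
            rw [this]; push_cast; ring
          rw [hc]
          ring
        rw [step2]
        simp only [Finset.sum_sub_distrib, Finset.sum_add_distrib]
        have e3 : ∑ j ∈ Finset.range (M+1), (if j = 0 then 0 else A (M+1) (j-1)) * Q j
            = ∑ k ∈ Finset.range (M+1), A (M+1) k * Q (k+1) := by
          rw [Finset.sum_range_succ' _ M]
          simp only [if_pos rfl, zero_mul, add_zero, Nat.add_sub_cancel, if_true,
            Nat.succ_ne_zero, if_false]
          rw [Finset.sum_range_succ _ M, A_pred, zero_mul, add_zero]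
        have e4 : ∑ j ∈ Finset.range (M+1), (if j = M then 4*((M:Polynomial ℝ)+1)*X else 0) * Q j
            = 4*((M:Polynomial ℝ)+1)*X*(Q M) := by
          simp only [ite_mul, zero_mul]
          rw [Finset.sum_ite_eq']
          rw [if_pos (Finset.mem_range.mpr (by omega))]
        have e5 : ∑ j ∈ Finset.range (M+1), 4*((M:Polynomial ℝ)+1)*X*(A M j * Q j)
            = 4*((M:Polynomial ℝ)+1)*X*(∑ k ∈ Finset.range (M+1), A M k * Q k) := by
          rw [Finset.mul_sum]
        have e2 : ∑ j ∈ Finset.range (M+1), 2*(X*(1-X)* (derivative (A (M+1) j) * Q j))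
            = 2*(X*(1-X)* ∑ k ∈ Finset.range (M+1), derivative (A (M+1) k) * Q k) := by
          rw [Finset.mul_sum, Finset.mul_sum]
        rw [e3, e4, e5, e2]
      -- final assembly
      rw [hT, hA]
      have hmulsum : (1 + (2*((M:Polynomial ℝ)+1)+1)*X) * (∑ k ∈ Finset.range (M+1), A (M+1) k * Q k)
          = ∑ k ∈ Finset.range (M+1), (1 + (2*((M:Polynomial ℝ)+1)+1)*X) * (A (M+1) k * Q k) := by
        rw [Finset.mul_sum]
      linear_combination hmulsum + hkeysum + (-4*((M:Polynomial ℝ)+1)*X) * H2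

end Induction
end S15

namespace S15A
variable {n : ℕ}

def val (σ : Fin n → Fin n × Bool) (i : Fin n) : ℤ :=
  if (σ i).2 then -(((σ i).1 : ℤ) + 1) else ((σ i).1 : ℤ) + 1

def WP (σ : Fin n → Fin n × Bool) (i : Fin n) : Prop :=
  val σ i = (i : ℤ) + 1 ∨ val σ i < val σ (σ i).1

def wx (σ : Fin n → Fin n × Bool) : ℕ := (Finset.univ.filter (WP σ)).card

lemma bval_eq (σ : Fin n → Fin n × Bool) (k : ℕ) (h1 : 1 ≤ k) (h2 : k ≤ n) :
    bval σ k = val σ ⟨k-1, by omega⟩ := by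
  rw [bval, dif_pos ⟨h1, h2⟩]; rfl

lemma val_natAbs (σ : Fin n → Fin n × Bool) (i : Fin n) :
    (val σ i).natAbs = (σ i).1.val + 1 := by
  by_cases h : (σ i).2 <;> simp [val, h] <;> omega

lemma val_bound (σ : Fin n → Fin n × Bool) (i : Fin n) :
    1 ≤ (val σ i).natAbs ∧ (val σ i).natAbs ≤ n := by
  rw [val_natAbs]
  have := (σ i).1.isLt
  omega

lemma pred_iff (σ : Fin n → Fin n × Bool) (k : ℕ) (h1 : 1 ≤ k) (h2 : k ≤ n) :
    (bval σ k = (k : ℤ) ∨ bval σ k < bval σ (bval σ k).natAbs)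
      ↔ WP σ ⟨k-1, by omega⟩ := by
  set j : Fin n := ⟨k-1, by omega⟩ with hj
  have hb : bval σ k = val σ j := bval_eq σ k h1 h2
  have hNA : (bval σ k).natAbs = (σ j).1.val + 1 := by rw [hb, val_natAbs]
  have hb2 : bval σ ((bval σ k).natAbs) = val σ (σ j).1 := by
    have hfin : (⟨(σ j).1.val + 1 - 1, by have := (σ j).1.isLt; omega⟩ : Fin n) = (σ j).1 :=
      Fin.ext (by simp)
    rw [hNA, bval_eq σ _ (by omega) (by have := (σ j).1.isLt; omega), hfin]
  rw [WP, hb2, hb]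
  have hjv : ((j : ℕ) : ℤ) = (k : ℤ) - 1 := by
    have : (j : ℕ) = k - 1 := rfl
    rw [this]; omega
  constructor
  · rintro (h | h)
    · left; rw [h, hjv]; ring
    · right; exact h
  · rintro (h | h)
    · left; rw [h, hjv]; ring
    · right; exact h

lemma bwexc_eq_wx (σ : Fin n → Fin n × Bool) : bwexcNum σ = wx σ := by
  unfold bwexcNum wx
  apply Finset.card_bij (fun (k : ℕ) (hk : k ∈ _) => (⟨k-1, by
    have := Finset.mem_Icc.mp (Finset.mem_filter.mp hk).1; omega⟩ : Fin n))
  · intro k hk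
    obtain ⟨hk1, hk2⟩ := Finset.mem_filter.mp hk
    have hI := Finset.mem_Icc.mp hk1
    exact Finset.mem_filter.mpr ⟨Finset.mem_univ _,
      (pred_iff σ k hI.1 hI.2).mp hk2⟩
  · intro a ha b hb hab
    have hIa := Finset.mem_Icc.mp (Finset.mem_filter.mp ha).1
    have hIb := Finset.mem_Icc.mp (Finset.mem_filter.mp hb).1
    have := congrArg Fin.val hab
    simp only at this
    omega
  · intro j hj
    refine ⟨(j : ℕ) + 1, Finset.mem_filter.mpr ⟨Finset.mem_Icc.mpr ⟨by omega, by
      have := j.isLt; omega⟩, ?_⟩, ?_⟩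
    · rw [pred_iff σ ((j:ℕ)+1) (by omega) (by have := j.isLt; omega)]
      have : (⟨(j:ℕ)+1-1, by have := j.isLt; omega⟩ : Fin n) = j := by
        apply Fin.ext; simp
      rw [this]
      exact (Finset.mem_filter.mp hj).2
    · apply Fin.ext; simp

lemma mem_BPerms (σ : Fin n → Fin n × Bool) :
    σ ∈ BPerms n ↔ Function.Injective fun i => (σ i).1 := by
  simp [BPerms]

lemma card_BPerms (m : ℕ) : (BPerms m).card = 2^m * m.factorial := by
  have h : (Finset.univ : Finset ((Fin m → Bool) × Equiv.Perm (Fin m))).card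
      = (BPerms m).card := by
    refine Finset.card_bij (fun a _ => fun i => (a.2 i, a.1 i)) ?_ ?_ ?_
    · intro a _
      rw [mem_BPerms]
      intro x y hxy
      have : a.2 x = a.2 y := by simpa using congrArg id hxy
      exact a.2.injective this
    · intro a _ b _ hab
      have h1 : a.1 = b.1 := funext fun i => congrArg Prod.snd (congrFun hab i)
      have h2 : a.2 = b.2 := Equiv.ext fun i => congrArg Prod.fst (congrFun hab i)
      exact Prod.ext h1 h2
    · intro σ hσ
      rw [mem_BPerms] at hσ
      have hbij : Function.Bijective fun i => (σ i).1 :=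
        (Finite.injective_iff_bijective).mp hσ
      refine ⟨(fun i => (σ i).2, Equiv.ofBijective _ hbij), Finset.mem_univ _, ?_⟩
      funext i
      exact Prod.mk.eta
  rw [← h]
  simp [Fintype.card_perm, mul_comm]

/-! ### insertion -/

def emb (a : Fin n × Bool) : Fin (n+1) × Bool := (a.1.castSucc, a.2)

def ins (σ : Fin n → Fin n × Bool) (p : Fin (n+1)) (ε : Bool) :
    Fin (n+1) → Fin (n+1) × Bool :=
  fun j => if hjp : j = p then (Fin.last n, ε)
    else if hj : j = Fin.last n then emb (σ (p.castPred (fun hp => hjp (hj.trans hp.symm))))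
    else emb (σ (j.castPred hj))

lemma ins_self (σ : Fin n → Fin n × Bool) (p : Fin (n+1)) (ε : Bool) :
    ins σ p ε p = (Fin.last n, ε) := by simp [ins]

lemma ins_last (σ : Fin n → Fin n × Bool) (p : Fin (n+1)) (ε : Bool) (hp : p ≠ Fin.last n) :
    ins σ p ε (Fin.last n) = emb (σ (p.castPred hp)) := by
  rw [ins, dif_neg (fun h => hp h.symm), dif_pos rfl]

lemma ins_mid (σ : Fin n → Fin n × Bool) (p : Fin (n+1)) (ε : Bool) (i : Fin n)
    (h : i.castSucc ≠ p) : ins σ p ε i.castSucc = emb (σ i) := by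
  rw [ins, dif_neg h, dif_neg (Fin.castSucc_lt_last i).ne]
  rw [Fin.castPred_castSucc]

lemma ins_mem (σ : Fin n → Fin n × Bool) (p : Fin (n+1)) (ε : Bool)
    (hσ : σ ∈ BPerms n) : ins σ p ε ∈ BPerms (n+1) := by
  rw [mem_BPerms] at hσ ⊢
  intro x y hxy
  simp only at hxy
  -- analyze values
  by_cases hx : x = p <;> by_cases hy : y = p
  · rw [hx, hy]
  · exfalso
    rw [hx, ins_self] at hxy
    by_cases hyl : y = Fin.last n
    · rw [hyl, ins_last σ p ε (fun h => hy (hyl.trans h.symm))] at hxy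
      exact (Fin.castSucc_lt_last _).ne' hxy
    · obtain ⟨i, rfl⟩ := Fin.exists_castSucc_eq.mpr hyl
      rw [ins_mid σ p ε i hy] at hxy
      exact (Fin.castSucc_lt_last _).ne' hxy
  · exfalso
    rw [hy, ins_self] at hxy
    by_cases hxl : x = Fin.last n
    · rw [hxl, ins_last σ p ε (fun h => hx (hxl.trans h.symm))] at hxy
      exact (Fin.castSucc_lt_last _).ne hxy
    · obtain ⟨i, rfl⟩ := Fin.exists_castSucc_eq.mpr hxl
      rw [ins_mid σ p ε i hx] at hxy
      exact (Fin.castSucc_lt_last _).ne hxy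
  · -- both ≠ p : values are castSucc of σ at indices ix, iy
    have hval : ∀ z (hz : z ≠ p), ((ins σ p ε z).1 : Fin (n+1))
        = Fin.castSucc (σ (if hzl : z = Fin.last n then p.castPred (fun h => hz (hzl.trans h.symm))
            else z.castPred hzl)).1 := by
      intro z hz
      by_cases hzl : z = Fin.last n
      · subst hzl
        rw [ins_last σ p ε (fun h => hz h.symm), dif_pos rfl]
        rfl
      · obtain ⟨i, rfl⟩ := Fin.exists_castSucc_eq.mpr hzl
        rw [ins_mid σ p ε i hz, dif_neg hzl]
        rfl
    rw [hval x hx, hval y hy] at hxy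
    have h2 := hσ (Fin.castSucc_injective n hxy)
    -- conclude x = y
    by_cases hxl : x = Fin.last n <;> by_cases hyl : y = Fin.last n
    · rw [hxl, hyl]
    · exfalso
      rw [dif_pos hxl, dif_neg hyl] at h2
      have := congrArg Fin.castSucc h2
      rw [Fin.castSucc_castPred, Fin.castSucc_castPred] at this
      exact hy (this.symm ▸ rfl)
    · exfalso
      rw [dif_neg hxl, dif_pos hyl] at h2
      have := congrArg Fin.castSucc h2
      rw [Fin.castSucc_castPred, Fin.castSucc_castPred] at this
      exact hx this
    · rw [dif_neg hxl, dif_neg hyl] at h2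
      have := congrArg Fin.castSucc h2
      rw [Fin.castSucc_castPred, Fin.castSucc_castPred] at this
      exact this

lemma emb_inj : Function.Injective (emb (n := n)) := by
  intro a b h
  have h1 := congrArg Prod.fst h
  have h2 := congrArg Prod.snd h
  simp only [emb] at h1 h2
  exact Prod.ext (Fin.castSucc_injective n h1) h2

lemma ins_inj : Function.Injective
    (fun q : (Fin n → Fin n × Bool) × (Fin (n+1) × Bool) => ins q.1 q.2.1 q.2.2) := by
  rintro ⟨σ1, p1, ε1⟩ ⟨σ2, p2, ε2⟩ h
  simp only at h
  -- p1 = p2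
  have hp : p1 = p2 := by
    by_contra hne
    have h1 := congrFun h p1
    rw [ins_self] at h1
    by_cases hl : p1 = Fin.last n
    · rw [hl] at h1 hne
      rw [ins_last σ2 p2 ε2 (fun he => hne he.symm)] at h1
      exact (Fin.castSucc_lt_last _).ne' (congrArg Prod.fst h1)
    · obtain ⟨i, hi⟩ := Fin.exists_castSucc_eq.mpr hl
      rw [← hi] at h1 hne
      rw [ins_mid σ2 p2 ε2 i hne] at h1
      exact (Fin.castSucc_lt_last _).ne' (congrArg Prod.fst h1)
  subst hp
  have hε : ε1 = ε2 := by
    have h1 := congrFun h p1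
    rw [ins_self, ins_self] at h1
    exact congrArg Prod.snd h1
  subst hε
  have hσ : σ1 = σ2 := by
    funext i
    by_cases hip : i.castSucc = p1
    · have hl : p1 ≠ Fin.last n := fun he => (Fin.castSucc_lt_last i).ne (hip.trans he)
      have h1 := congrFun h (Fin.last n)
      rw [ins_last σ1 p1 ε1 hl, ins_last σ2 p1 ε1 hl] at h1
      have : p1.castPred hl = i := by
        apply Fin.castSucc_injective n
        rw [Fin.castSucc_castPred, hip]
      rw [this] at h1
      exact emb_inj h1
    · have h1 := congrFun h i.castSucc
      rw [ins_mid σ1 p1 ε1 i hip, ins_mid σ2 p1 ε1 i hip] at h1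
      exact emb_inj h1
  rw [hσ]

lemma BPerms_succ_eq_image :
    BPerms (n+1) = ((BPerms n) ×ˢ (Finset.univ : Finset (Fin (n+1) × Bool))).image
      (fun q => ins q.1 q.2.1 q.2.2) := by
  symm
  apply Finset.eq_of_subset_of_card_le
  · intro τ hτ
    obtain ⟨q, hq, rfl⟩ := Finset.mem_image.mp hτ
    exact ins_mem _ _ _ (Finset.mem_product.mp hq).1
  · rw [Finset.card_image_of_injective _ ins_inj, Finset.card_product]
    rw [card_BPerms, card_BPerms]
    simp [Nat.factorial_succ]
    apply Nat.le_of_eq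
    ring

lemma val_congr {τ : Fin (n+1) → Fin (n+1) × Bool} {j : Fin (n+1)} {a : Fin n × Bool}
    (h : τ j = emb a) :
    val τ j = (if a.2 then -((a.1 : ℤ)+1) else (a.1 : ℤ)+1) := by
  rw [val, h]
  by_cases h2 : a.2 <;> simp [emb, h2]

lemma val_congr' {σ : Fin n → Fin n × Bool} {τ : Fin (n+1) → Fin (n+1) × Bool}
    {j : Fin (n+1)} {i : Fin n} (h : τ j = emb (σ i)) : val τ j = val σ i :=
  val_congr h

lemma val_le (σ : Fin n → Fin n × Bool) (i : Fin n) :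
    val σ i ≤ n ∧ -(n:ℤ) ≤ val σ i ∧ val σ i ≠ 0 := by
  have h := val_bound σ i
  omega

/-- case p = last -/
lemma wx_ins_last (σ : Fin n → Fin n × Bool) (ε : Bool) :
    wx (ins σ (Fin.last n) ε) = wx σ + (if ε then 0 else 1) := by
  set τ := ins σ (Fin.last n) ε with hτ
  have hmid : ∀ i : Fin n, τ i.castSucc = emb (σ i) := fun i =>
    ins_mid σ _ ε i (Fin.castSucc_lt_last i).ne
  have hWmid : ∀ i : Fin n, WP τ i.castSucc ↔ WP σ i := by
    intro i
    unfold WP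
    rw [val_congr' (hmid i), hmid i]
    have h1 : ((emb (σ i)).1 : Fin (n+1)) = (σ i).1.castSucc := rfl
    rw [h1, val_congr' (hmid (σ i).1)]
    have h2 : ((i.castSucc : Fin (n+1)) : ℤ) = (i : ℤ) := by
      simp
    rw [h2]
  have hWlast : WP τ (Fin.last n) ↔ ε = false := by
    have h1 : τ (Fin.last n) = (Fin.last n, ε) := ins_self σ _ ε
    have hvτ : val τ (Fin.last n) = if ε then -((n:ℤ)+1) else (n:ℤ)+1 := by
      rw [val, h1]
      cases ε <;> simp
    have hfst : (τ (Fin.last n)).1 = Fin.last n := by rw [h1]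
    have hl : ((Fin.last n : Fin (n+1)) : ℤ) = (n:ℤ) := by simp
    unfold WP
    rw [hfst, hvτ, hl]
    cases ε <;> simp <;> omega
  unfold wx
  rw [Finset.card_filter, Finset.card_filter, Fin.sum_univ_castSucc]
  congr 1
  · exact Finset.sum_congr rfl fun i _ => by rw [if_congr (hWmid i) rfl rfl]
  · rw [if_congr hWlast rfl rfl]
    by_cases hε : ε <;> simp [hε]

/-- case p = castSucc v : the inserted value kills/creates one weak excedance depending
on the status of the predecessor u of v. -/
lemma wx_ins_mid' (σ : Fin n → Fin n × Bool) (hσ : Function.Injective fun i => (σ i).1)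
    (v u : Fin n) (hu : (σ u).1 = v) (ε : Bool) :
    wx (ins σ v.castSucc ε) + (if WP σ u then 1 else 0) = wx σ + 1 := by
  set τ := ins σ v.castSucc ε with hτdef
  set p := v.castSucc with hpdef
  have hpl : p ≠ Fin.last n := (Fin.castSucc_lt_last v).ne
  have hτp : τ p = (Fin.last n, ε) := ins_self σ p ε
  have hvp : val τ p = if ε then -((n:ℤ)+1) else (n:ℤ)+1 := by
    rw [val, hτp]; cases ε <;> simp
  have hcp : ∀ (h : p ≠ Fin.last n), p.castPred h = v := fun h => Fin.ext (by simp [hpdef])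
  have hτl : τ (Fin.last n) = emb (σ v) := by
    rw [hτdef, ins_last σ p ε hpl, hcp]
  have hvl : val τ (Fin.last n) = val σ v := val_congr' hτl
  have hmid : ∀ i : Fin n, i ≠ v → τ i.castSucc = emb (σ i) := fun i hi =>
    ins_mid σ p ε i (fun h => hi (Fin.castSucc_injective n h))
  have hcoe : ∀ i : Fin n, ((i.castSucc : Fin (n+1)) : ℤ) = (i : ℤ) := fun i => by simp
  have hvn : (v : ℤ) < (n : ℤ) := by exact_mod_cast v.isLt
  -- (a) the inserted position
  have hWp : WP τ p ↔ ε = true := by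
    unfold WP
    rw [show (τ p).1 = Fin.last n from by rw [hτp], hvp, hvl, hpdef, hcoe v]
    have hb := val_le σ v
    cases ε <;> simp <;> omega
  -- (c) generic positions
  have hWc : ∀ i : Fin n, i ≠ v → i ≠ u → (WP τ i.castSucc ↔ WP σ i) := by
    intro i hiv hiu
    have h1 : (σ i).1 ≠ v := fun h => hiu (hσ (h.trans hu.symm))
    unfold WP
    rw [val_congr' (hmid i hiv), hcoe i]
    rw [show (τ i.castSucc).1 = (σ i).1.castSucc from by rw [hmid i hiv]; rfl]
    rw [val_congr' (hmid (σ i).1 h1)]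
  have hwxσ : wx σ = ∑ i : Fin n, (if WP σ i then 1 else 0) := by
    rw [wx, Finset.card_filter]
  have hwxτ : wx τ = (∑ i : Fin n, (if WP τ i.castSucc then 1 else 0))
      + (if WP τ (Fin.last n) then 1 else 0) := by
    rw [wx, Finset.card_filter, Fin.sum_univ_castSucc]
  by_cases huv : u = v
  · -- σ v = ±v
    subst huv
    -- (b) last position
    have hWl : WP τ (Fin.last n) ↔ ε = false := by
      unfold WP
      rw [show (τ (Fin.last n)).1 = p from by
        rw [hτl]; show (σ u).1.castSucc = p; rw [hu, hpdef], hvp, hvl]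
      have hb := val_le σ u
      have hl : ((Fin.last n : Fin (n+1)) : ℤ) = (n:ℤ) := by simp
      rw [hl]
      cases ε <;> simp <;> omega
    have hsplit : (∑ i : Fin n, (if WP τ i.castSucc then 1 else 0))
        = (if WP τ u.castSucc then 1 else 0)
          + ∑ i ∈ Finset.univ.erase u, (if WP τ i.castSucc then 1 else 0) :=
      (Finset.add_sum_erase _ _ (Finset.mem_univ u)).symm
    have hsplitσ : (∑ i : Fin n, (if WP σ i then 1 else 0))
        = (if WP σ u then 1 else 0)
          + ∑ i ∈ Finset.univ.erase u, (if WP σ i then 1 else 0) :=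
      (Finset.add_sum_erase _ _ (Finset.mem_univ u)).symm
    have hrest : ∑ i ∈ Finset.univ.erase u, (if WP τ i.castSucc then 1 else 0)
        = ∑ i ∈ Finset.univ.erase u, (if WP σ i then 1 else 0) := by
      refine Finset.sum_congr rfl fun i hi => ?_
      have hiu : i ≠ u := (Finset.mem_erase.mp hi).1
      rw [if_congr (hWc i hiu hiu) rfl rfl]
    rw [hwxτ, hwxσ, hsplit, hsplitσ, hrest,
      if_congr hWp rfl rfl, if_congr hWl rfl rfl]
    cases ε <;> simp <;> omega
  · -- u ≠ v, so (σ v).1 ≠ v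
    have hσv : (σ v).1 ≠ v := fun h => huv (hσ (hu.trans h.symm))
    have hWl : WP τ (Fin.last n) ↔ WP σ v := by
      unfold WP
      rw [show (τ (Fin.last n)).1 = (σ v).1.castSucc from by rw [hτl]; rfl, hvl]
      rw [val_congr' (hmid (σ v).1 hσv)]
      have hb := val_le σ v
      have hl : ((Fin.last n : Fin (n+1)) : ℤ) = (n:ℤ) := by simp
      rw [hl]
      have hne : ¬ (val σ v = (v:ℤ)+1) := by
        intro h
        apply hσv
        have h2 := val_natAbs σ v
        rw [h] at h2
        have h3 : (σ v).1.val = v.val := by omega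
        exact Fin.ext h3
      constructor
      · rintro (h | h)
        · exfalso; omega
        · exact Or.inr h
      · rintro (h | h)
        · exact absurd h hne
        · exact Or.inr h
    have hWu : WP τ u.castSucc ↔ ε = false := by
      unfold WP
      rw [val_congr' (hmid u huv), hcoe u]
      rw [show (τ u.castSucc).1 = p from by
        rw [hmid u huv]; show (σ u).1.castSucc = p; rw [hu, hpdef], hvp]
      have hb := val_le σ u
      have hne : ¬ (val σ u = (u:ℤ)+1) := by
        intro h
        apply huv
        have h2 := val_natAbs σ u
        rw [h] at h2
        have h3 : (σ u).1.val = u.val := by omega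
        rw [← hu]
        exact (Fin.ext h3).symm ▸ rfl
      cases ε <;> simp [hvl] <;> omega
    -- split sums at v then u
    have huv' : u ∈ Finset.univ.erase v := Finset.mem_erase.mpr ⟨huv, Finset.mem_univ u⟩
    have hsplit : ∀ (f : Fin n → ℕ), (∑ i : Fin n, f i)
        = f v + (f u + ∑ i ∈ (Finset.univ.erase v).erase u, f i) := by
      intro f
      rw [← Finset.add_sum_erase _ _ (Finset.mem_univ v), ← Finset.add_sum_erase _ _ huv']
    have hrest : ∑ i ∈ (Finset.univ.erase v).erase u, (if WP τ i.castSucc then 1 else 0)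
        = ∑ i ∈ (Finset.univ.erase v).erase u, (if WP σ i then 1 else 0) := by
      refine Finset.sum_congr rfl fun i hi => ?_
      have hiu : i ≠ u := (Finset.mem_erase.mp hi).1
      have hiv : i ≠ v := (Finset.mem_erase.mp (Finset.mem_erase.mp hi).2).1
      rw [if_congr (hWc i hiv hiu) rfl rfl]
    rw [hwxτ, hwxσ, hsplit (fun i => if WP τ i.castSucc then 1 else 0),
      hsplit (fun i => if WP σ i then 1 else 0), hrest,
      if_congr hWp rfl rfl, if_congr hWu rfl rfl, if_congr hWl rfl rfl]
    by_cases hv : WP σ v <;> by_cases hu2 : WP σ u <;> cases ε <;> simp [hv, hu2] <;> omega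

open Polynomial in
/-- the polynomial `Q n = ∑_{σ ∈ B_n} X^{wexc σ}` -/
def Qp (m : ℕ) : Polynomial ℝ := ∑ σ ∈ BPerms m, Polynomial.X ^ bwexcNum σ

open Polynomial in
lemma Qp_recursion (n : ℕ) :
    Qp (n+1) = (1 + (2*(n:Polynomial ℝ)+1)*X) * Qp n
      + 2*(X*(1-X)* derivative (Qp n)) := by
  -- rewrite everything through wx
  have hQ : ∀ m, Qp m = ∑ σ ∈ BPerms m, (X : Polynomial ℝ) ^ wx σ := by
    intro m
    exact Finset.sum_congr rfl fun σ _ => by rw [bwexc_eq_wx]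
  rw [hQ, hQ]
  -- expand Qp (n+1) over insertions
  rw [BPerms_succ_eq_image, Finset.sum_image (fun a _ b _ h => ins_inj h)]
  rw [Finset.sum_product]
  -- pointwise over σ
  have main : ∀ σ ∈ BPerms n,
      (∑ pe : Fin (n+1) × Bool, (X : Polynomial ℝ) ^ wx (ins σ pe.1 pe.2))
      = (1 + (2*(n:Polynomial ℝ)+1)*X) * X ^ wx σ
        + 2*(X*(1-X)* derivative ((X : Polynomial ℝ) ^ wx σ)) := by
    intro σ hσmem
    have hσ : Function.Injective fun i => (σ i).1 := (mem_BPerms σ).mp hσmem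
    have hbij : Function.Bijective fun i => (σ i).1 :=
      (Finite.injective_iff_bijective).mp hσ
    set w := wx σ with hw
    have hwn : w ≤ n := by
      rw [hw, wx]
      calc (Finset.univ.filter (WP σ)).card ≤ (Finset.univ : Finset (Fin n)).card :=
        Finset.card_filter_le _ _
      _ = n := by simp
    rw [Fintype.sum_prod_type]
    rw [Fin.sum_univ_castSucc]
    -- the last-position part
    have hlast : (∑ ε : Bool, (X : Polynomial ℝ) ^ wx (ins σ (Fin.last n) ε))
        = X ^ w + X ^ (w+1) := by
      rw [Fintype.sum_bool, wx_ins_last σ true, wx_ins_last σ false]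
      simp [add_comm]
      rw [hw]
    -- the middle part
    have hmid2 : ∀ u : Fin n, ∀ ε : Bool,
        wx (ins σ ((σ u).1).castSucc ε) = if WP σ u then w else w + 1 := by
      intro u ε
      have h := wx_ins_mid' σ hσ (σ u).1 u rfl ε
      by_cases hWP : WP σ u <;> simp [hWP] at h ⊢ <;> omega
    have hreindex : (∑ v : Fin n, ∑ ε : Bool, (X : Polynomial ℝ) ^ wx (ins σ v.castSucc ε))
        = ∑ u : Fin n, ∑ ε : Bool, (X : Polynomial ℝ) ^ wx (ins σ ((σ u).1).castSucc ε) :=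
      (Fintype.sum_bijective _ hbij _ _ (fun u => rfl)).symm
    have hmidsum : (∑ u : Fin n, ∑ ε : Bool, (X : Polynomial ℝ) ^ wx (ins σ ((σ u).1).castSucc ε))
        = ∑ u : Fin n, (2 : Polynomial ℝ) * (if WP σ u then X ^ w else X ^ (w+1)) := by
      refine Finset.sum_congr rfl fun u _ => ?_
      rw [Fintype.sum_bool, hmid2 u true, hmid2 u false]
      by_cases hWP : WP σ u <;> simp [hWP] <;> ring
    have hcount : (∑ u : Fin n, (2 : Polynomial ℝ) * (if WP σ u then X ^ w else X ^ (w+1)))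
        = 2 * (w • (X:Polynomial ℝ) ^ w + (n - w) • (X:Polynomial ℝ) ^ (w+1)) := by
      rw [← Finset.mul_sum]
      congr 1
      rw [Finset.sum_ite, Finset.sum_const, Finset.sum_const]
      have h1 : (Finset.univ.filter (fun u => WP σ u)).card = w := by rw [hw]; rfl
      have h2 : (Finset.univ.filter (fun u => ¬ WP σ u)).card = n - w := by
        have h3 := Finset.card_filter_add_card_filter_not
          (s := (Finset.univ : Finset (Fin n))) (p := fun u => WP σ u)
        rw [h1] at h3
        simp only [Finset.card_univ, Fintype.card_fin] at h3
        omega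
      rw [h1, h2]
    have hpoint : 2 * (w • (X:Polynomial ℝ) ^ w + (n - w) • (X:Polynomial ℝ) ^ (w+1))
          + ((X:Polynomial ℝ) ^ w + X ^ (w+1))
        = (1 + (2*(n:Polynomial ℝ)+1)*X) * X ^ w
          + 2*(X*(1-X)* derivative ((X : Polynomial ℝ) ^ w)) := by
      rw [derivative_X_pow, Polynomial.C_eq_natCast, nsmul_eq_mul, nsmul_eq_mul]
      have hc := (Nat.cast_sub hwn : ((n - w : ℕ) : Polynomial ℝ) = _)
      rw [hc]
      match w with
      | 0 => simp; ring
      | (w'+1) =>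
        have : w' + 1 - 1 = w' := rfl
        rw [this]
        push_cast
        ring
    rw [hreindex, hmidsum, hcount, hlast, hpoint]
  rw [Finset.sum_congr rfl main]
  rw [Finset.sum_add_distrib, ← Finset.mul_sum]
  congr 1
  have : ∀ σ : Fin n → Fin n × Bool, (2:Polynomial ℝ)*(X*(1-X)* derivative ((X:Polynomial ℝ) ^ wx σ))
      = 2*(X*((1-X)* derivative ((X:Polynomial ℝ) ^ wx σ))) := fun σ => by ring
  rw [Finset.sum_congr rfl (fun σ _ => this σ), ← Finset.mul_sum, ← Finset.mul_sum,
    ← Finset.mul_sum, ← derivative_sum]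
  ring

end S15A

theorem stmt15_aux : ∀ n : ℕ, 2 ≤ n → ∀ x : ℝ,
    BEuler n x = (1 + x) ^ n +
      ∑ k ∈ Finset.range (n - 1), (n.choose k : ℝ) * BEuler k x *
        (∑ m ∈ Finset.Icc 1 (n - 1 - k), x ^ m) * 2 ^ (n - k) := by
  intro n hn x
  have heval : ∀ m, BEuler m x = (S15A.Qp m).eval x := by
    intro m
    rw [BEuler, S15A.Qp, Polynomial.eval_finset_sum]
    exact Finset.sum_congr rfl fun σ _ => by
      rw [Polynomial.eval_pow, Polynomial.eval_X]
  have hQ0 : S15A.Qp 0 = 1 := by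
    have h0 : ∀ σ : Fin 0 → Fin 0 × Bool, bwexcNum σ = 0 := by
      intro σ
      rw [bwexcNum]
      simp
    rw [S15A.Qp, Finset.sum_congr rfl (fun σ _ => by rw [h0 σ, pow_zero]),
      Finset.sum_const, S15A.card_BPerms]
    simp
  have hG := S15.goal_all S15A.Qp S15A.Qp_recursion hQ0 n
  obtain ⟨N, rfl⟩ : ∃ N, n = N + 2 := ⟨n - 2, by omega⟩
  rw [heval, hG, Polynomial.eval_add, Polynomial.eval_pow, Polynomial.eval_finset_sum]
  congr 1
  · rw [Polynomial.eval_add, Polynomial.eval_one, Polynomial.eval_X]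
  · rw [show (N+2) - 1 = N+1 from rfl]
    rw [Finset.sum_range_succ, S15.A_pred, zero_mul, Polynomial.eval_zero, add_zero]
    refine Finset.sum_congr rfl fun k hk => ?_
    rw [Polynomial.eval_mul, S15.A, Polynomial.eval_mul, Polynomial.eval_mul,
      Polynomial.eval_natCast, Polynomial.eval_pow]
    rw [show S15.geo ((N+2)-1-k) = ∑ m ∈ Finset.Icc 1 ((N+2)-1-k), Polynomial.X ^ m from rfl,
      Polynomial.eval_finset_sum]
    simp only [Polynomial.eval_pow, Polynomial.eval_X, Polynomial.eval_ofNat]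
    rw [← heval k]
    rw [show N + 2 - 1 - k = N + 1 - k from by omega]
    ring

theorem stmt15 : ∀ n : ℕ, 2 ≤ n → ∀ x : ℝ,
    BEuler n x = (1 + x) ^ n +
      ∑ k ∈ Finset.range (n - 1), (n.choose k : ℝ) * BEuler k x *
        (∑ m ∈ Finset.Icc 1 (n - 1 - k), x ^ m) * 2 ^ (n - k) := stmt15_aux

end
end

section
/- For every n ≥ 0, one has the identity of polynomials in x and q: d_n^B(x,q) = Σ_{i=0}^{n} Σ_{j=0}^{i} C(n,i) · C(i,j) · d_{n-j}(x) · q^i, where d_m(x) is the (type A) derangement polynomial. -/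
open scoped Classical
open Finset

noncomputable section

/-- type B `q`-derangement polynomial `d_n^B(x,q) = Σ_{σ ∈ D_n^B} x^exc(σ) q^N(σ)` -/
def dBq (n : ℕ) (x q : ℝ) : ℝ :=
  ∑ σ ∈ (BPerms n).filter (fun σ => bfixNum σ = 0), x ^ bexcNum σ * q ^ bnegNum σ


lemma card_filter_equiv {α β : Type*} [Fintype α] [Fintype β] (e : α ≃ β) (p : β → Prop) [DecidablePred p] :
    ((univ : Finset α).filter fun a => p (e a)).card = ((univ : Finset β).filter p).card := by
  apply Finset.card_bij (fun a _ => e a)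
  · intro a ha; simp_all
  · intro a _ b _ h; exact e.injective h
  · intro b hb; exact ⟨e.symm b, by simp_all, by simp⟩

lemma sum_filter_equiv {α β M : Type*} [Fintype α] [Fintype β] [AddCommMonoid M]
    (e : α ≃ β) (p : β → Prop) [DecidablePred p] (f : β → M) :
    ∑ a ∈ (univ : Finset α).filter (fun a => p (e a)), f (e a)
      = ∑ b ∈ (univ : Finset β).filter p, f b := by
  apply Finset.sum_bij (fun a _ => e a)
  · intro a ha; simp_all
  · intro a _ b _ h; exact e.injective h
  · intro b hb; exact ⟨e.symm b, by simp_all, by simp⟩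
  · intros; rfl

lemma card_filter_fin_lt {n m : ℕ} (h : m ≤ n) :
    ((univ : Finset (Fin n)).filter fun k : Fin n => (k : ℕ) < m).card = m := by
  have : ((univ : Finset (Fin n)).filter fun k : Fin n => (k : ℕ) < m).card
      = (univ : Finset (Fin m)).card := by
    apply Finset.card_bij (fun (k : Fin n) hk => (⟨(k : ℕ), (Finset.mem_filter.mp hk).2⟩ : Fin m))
    · intros; simp
    · intro a ha b hb hab; exact Fin.ext (by simpa using congrArg Fin.val hab)
    · intro b _; exact ⟨⟨(b : ℕ), lt_of_lt_of_le b.isLt h⟩, by simp, rfl⟩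
  simpa using this

lemma card_Icc_filter {n : ℕ} (p : ℕ → Prop) (q : Fin n → Prop) [DecidablePred p] [DecidablePred q]
    (hpq : ∀ i : Fin n, p ((i : ℕ) + 1) ↔ q i) :
    ((Finset.Icc 1 n).filter p).card = ((univ : Finset (Fin n)).filter q).card := by
  apply Finset.card_bij
    (fun k hk => (⟨k - 1, by
      have : k ∈ Finset.Icc 1 n := (Finset.mem_filter.mp hk).1
      simp only [Finset.mem_Icc] at this; omega⟩ : Fin n))
  · intro k hk
    have h1 := Finset.mem_filter.mp hk
    have h2 := Finset.mem_Icc.mp h1.1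
    refine Finset.mem_filter.mpr ⟨Finset.mem_univ _, ?_⟩
    apply (hpq ⟨k - 1, by omega⟩).mp
    simp only [Fin.val_mk]
    rw [show k - 1 + 1 = k by omega]; exact h1.2
  · intro a ha b hb hab
    have h1 := Finset.mem_Icc.mp (Finset.mem_filter.mp ha).1
    have h2 := Finset.mem_Icc.mp (Finset.mem_filter.mp hb).1
    have := congrArg Fin.val hab
    simp only at this; omega
  · intro i hi
    refine ⟨(i : ℕ) + 1, ?_, by apply Fin.ext; simp⟩
    have h1 := (Finset.mem_filter.mp hi).2
    exact Finset.mem_filter.mpr ⟨Finset.mem_Icc.mpr ⟨by omega, by omega⟩, (hpq i).mpr h1⟩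

section Chunk2
variable {n : ℕ}

/-- signed value of `v` given value-sign function `t` -/
def bkey (t : Fin n → Bool) (v : Fin n) : ℤ :=
  if t v then -((v : ℤ) + 1) else (v : ℤ) + 1

/-- the signed permutation built from a permutation and value-signs -/
def bmk (t : Fin n → Bool) (π : Equiv.Perm (Fin n)) : Fin n → Fin n × Bool :=
  fun i => (π i, t (π i))

def exc0 (π : Equiv.Perm (Fin n)) : ℕ :=
  ((univ : Finset (Fin n)).filter fun i : Fin n => (i : ℕ) < (π i : ℕ)).card

def fixset (π : Equiv.Perm (Fin n)) : Finset (Fin n) :=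
  (univ : Finset (Fin n)).filter fun i => π i = i

def cexc (t : Fin n → Bool) (π : Equiv.Perm (Fin n)) : ℕ :=
  ((univ : Finset (Fin n)).filter fun j : Fin n => bkey t j < bkey t (π j)).card

lemma bkey_neg_iff (t : Fin n → Bool) (v : Fin n) : bkey t v < 0 ↔ t v = true := by
  unfold bkey; split <;> simp_all <;> omega

lemma bkey_inj (t : Fin n → Bool) : Function.Injective (bkey t) := by
  intro a b h
  unfold bkey at h
  have ha := Int.natCast_nonneg (a : ℕ); have hb := Int.natCast_nonneg (b : ℕ)
  split at h <;> split at h <;> exact Fin.ext (by omega)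

lemma bkey_eq_pos_iff (t : Fin n → Bool) (v i : Fin n) :
    bkey t v = (i : ℤ) + 1 ↔ (t v = false ∧ v = i) := by
  unfold bkey
  have hv := Int.natCast_nonneg (v : ℕ); have hi := Int.natCast_nonneg (i : ℕ)
  constructor
  · intro h; split at h
    · omega
    · exact ⟨by simp_all, Fin.ext (by omega)⟩
  · rintro ⟨h1, rfl⟩; simp [h1]

lemma excNum_eq (π : Equiv.Perm (Fin n)) : excNum π = exc0 π := by
  unfold excNum exc0
  apply card_Icc_filter
  intro i
  rw [permVal, dif_pos (by constructor <;> omega)]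
  have : ((⟨(i:ℕ)+1-1, by omega⟩ : Fin n)) = i := by apply Fin.ext; simp
  rw [this]; omega

lemma fixNum_eq (π : Equiv.Perm (Fin n)) : fixNum π = (fixset π).card := by
  unfold fixNum fixset
  apply card_Icc_filter
  intro i
  rw [permVal, dif_pos (by constructor <;> omega)]
  have : ((⟨(i:ℕ)+1-1, by omega⟩ : Fin n)) = i := by apply Fin.ext; simp
  rw [this]
  constructor
  · intro h; exact Fin.ext (by omega)
  · intro h; rw [h]

lemma bval_bmk (t : Fin n → Bool) (π : Equiv.Perm (Fin n)) (i : Fin n) :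
    bval (bmk t π) ((i : ℕ) + 1) = bkey t (π i) := by
  rw [bval, dif_pos (by constructor <;> omega)]
  have : ((⟨(i:ℕ)+1-1, by omega⟩ : Fin n)) = i := by apply Fin.ext; simp
  rw [this]
  unfold bmk bkey
  split <;> simp_all

lemma bmk_mem (t : Fin n → Bool) (π : Equiv.Perm (Fin n)) : bmk t π ∈ BPerms n := by
  unfold BPerms bmk
  simp only [Finset.mem_filter, Finset.mem_univ, true_and]
  exact π.injective

lemma bneg_bmk (t : Fin n → Bool) (π : Equiv.Perm (Fin n)) :
    bnegNum (bmk t π) = ((univ : Finset (Fin n)).filter fun v : Fin n => t v = true).card := by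
  unfold bnegNum
  rw [card_Icc_filter (p := fun k => bval (bmk t π) k < 0) (q := fun i : Fin n => t (π i) = true)
    (fun i => by beta_reduce; rw [bval_bmk, bkey_neg_iff])]
  exact card_filter_equiv π (fun v => t v = true)

lemma bexc_bmk (t : Fin n → Bool) (π : Equiv.Perm (Fin n)) :
    bexcNum (bmk t π) = cexc t π := by
  unfold bexcNum cexc
  rw [card_Icc_filter
    (p := fun k => bval (bmk t π) k < bval (bmk t π) (bval (bmk t π) k).natAbs)
    (q := fun i : Fin n => bkey t (π i) < bkey t (π (π i)))
    (fun i => by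
      beta_reduce
      rw [bval_bmk]
      have hnat : (bkey t (π i)).natAbs = ((π i : ℕ)) + 1 := by
        unfold bkey; split <;> omega
      rw [hnat, bval_bmk])]
  exact card_filter_equiv π (fun j => bkey t j < bkey t (π j))

lemma bfix_bmk (t : Fin n → Bool) (π : Equiv.Perm (Fin n)) :
    bfixNum (bmk t π) = 0 ↔ ∀ i, π i = i → t i = true := by
  unfold bfixNum
  rw [card_Icc_filter
    (p := fun k => bval (bmk t π) k = (k : ℤ))
    (q := fun i : Fin n => π i = i ∧ t i = false)
    (fun i => by
      beta_reduce
      rw [bval_bmk]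
      rw [show ((((i:ℕ) + 1 : ℕ)) : ℤ) = (i : ℤ) + 1 by push_cast; ring]
      rw [bkey_eq_pos_iff]
      constructor
      · rintro ⟨h1, h2⟩; exact ⟨h2, by rw [← h2]; exact h1⟩
      · rintro ⟨hπ, ht⟩; exact ⟨by rw [hπ]; exact ht, hπ⟩)]
  rw [Finset.card_eq_zero, Finset.filter_eq_empty_iff]
  constructor
  · intro h i hf
    by_contra ht
    exact h (Finset.mem_univ i) ⟨hf, by simpa using ht⟩
  · rintro h i _ ⟨h1, h2⟩
    rw [h i h1] at h2; simp at h2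

end Chunk2

section Chunk3
variable {n : ℕ}

def keyset (t : Fin n → Bool) : Finset ℤ := Finset.image (bkey t) univ

lemma keyset_card (t : Fin n → Bool) : (keyset t).card = n := by
  rw [keyset, Finset.card_image_of_injective _ (bkey_inj t), Finset.card_univ, Fintype.card_fin]

def psi (t : Fin n → Bool) (v : Fin n) : Fin n :=
  ((keyset t).orderIsoOfFin (keyset_card t)).symm
    ⟨bkey t v, Finset.mem_image_of_mem _ (Finset.mem_univ v)⟩

lemma psi_lt_iff (t : Fin n → Bool) (a b : Fin n) :
    psi t a < psi t b ↔ bkey t a < bkey t b := by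
  unfold psi
  rw [OrderIso.lt_iff_lt]
  exact Subtype.mk_lt_mk

lemma psi_inj (t : Fin n → Bool) : Function.Injective (psi t) := by
  intro a b h
  by_contra hne
  have : bkey t a ≠ bkey t b := fun hk => hne (bkey_inj t hk)
  rcases lt_or_gt_of_ne this with h1 | h1
  · have := (psi_lt_iff t a b).mpr h1
    exact absurd h (ne_of_lt this)
  · have := (psi_lt_iff t b a).mpr h1
    exact absurd h.symm (ne_of_lt this)

def psie (t : Fin n → Bool) : Equiv.Perm (Fin n) :=
  Equiv.ofBijective (psi t) (Finite.injective_iff_bijective.mp (psi_inj t))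

lemma psie_apply (t : Fin n → Bool) (v : Fin n) : psie t v = psi t v := rfl

def tcount (t : Fin n → Bool) : ℕ := ((univ : Finset (Fin n)).filter fun v => t v = true).card

lemma psi_rank (t : Fin n → Bool) (v : Fin n) :
    ((psi t v : Fin n) : ℕ)
      = ((univ : Finset (Fin n)).filter fun w => bkey t w < bkey t v).card := by
  have h1 : ((univ : Finset (Fin n)).filter fun u : Fin n => (u : ℕ) < ((psi t v : Fin n) : ℕ)).card
      = ((psi t v : Fin n) : ℕ) := card_filter_fin_lt (le_of_lt (psi t v).isLt)
  rw [← h1]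
  rw [← card_filter_equiv (psie t) (fun u : Fin n => (u : ℕ) < ((psi t v : Fin n) : ℕ))]
  apply Finset.card_bij (fun a _ => a) _ (fun a _ b _ h => h) _
  · intro a ha
    simp only [Finset.mem_filter, Finset.mem_univ, true_and] at ha ⊢
    rw [← psi_lt_iff t a v]
    exact ha
  · intro b hb
    refine ⟨b, ?_, rfl⟩
    simp only [Finset.mem_filter, Finset.mem_univ, true_and] at hb ⊢
    show ((psie t b : Fin n) : ℕ) < _
    rw [psie_apply]
    exact (psi_lt_iff t b v).mpr hb

lemma psi_lt_tcount_iff (t : Fin n → Bool) (v : Fin n) :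
    ((psi t v : Fin n) : ℕ) < tcount t ↔ t v = true := by
  rw [psi_rank]
  constructor
  · intro h
    by_contra ht
    have hpos : 0 < bkey t v := by
      unfold bkey; rw [if_neg (by simpa using ht)]; positivity
    have hsub : ((univ : Finset (Fin n)).filter fun w => t w = true)
        ⊆ (univ : Finset (Fin n)).filter fun w => bkey t w < bkey t v := by
      intro w hw
      simp only [Finset.mem_filter, Finset.mem_univ, true_and] at hw ⊢
      have := (bkey_neg_iff t w).mpr hw
      omega
    have := Finset.card_le_card hsub
    unfold tcount at h
    omega
  · intro ht
    have hneg : bkey t v < 0 := (bkey_neg_iff t v).mpr ht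
    have hvmem : v ∈ (univ : Finset (Fin n)).filter fun w => t w = true := by
      simp [ht]
    have hsub : ((univ : Finset (Fin n)).filter fun w => bkey t w < bkey t v)
        ⊆ (((univ : Finset (Fin n)).filter fun w => t w = true).erase v) := by
      intro w hw
      simp only [Finset.mem_filter, Finset.mem_univ, true_and] at hw
      refine Finset.mem_erase.mpr ⟨?_, ?_⟩
      · rintro rfl; omega
      · simp only [Finset.mem_filter, Finset.mem_univ, true_and]
        rw [← bkey_neg_iff]; omega
    have h1 := Finset.card_le_card hsub
    rw [Finset.card_erase_of_mem hvmem] at h1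
    have h2 : 0 < tcount t := Finset.card_pos.mpr ⟨v, hvmem⟩
    unfold tcount at h2 ⊢
    omega

def Epoly (n i : ℕ) (x : ℝ) : ℝ :=
  ∑ ρ ∈ (univ : Finset (Equiv.Perm (Fin n))).filter
      (fun ρ => ∀ k : Fin n, ρ k = k → (k : ℕ) < i), x ^ exc0 ρ

lemma stepB (t : Fin n → Bool) (x : ℝ) :
    ∑ π ∈ (univ : Finset (Equiv.Perm (Fin n))).filter
        (fun π => ∀ i, π i = i → t i = true), x ^ cexc t π
      = Epoly n (tcount t) x := by
  unfold Epoly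
  apply Finset.sum_nbij' (i := fun π => ((psie t).symm.trans π).trans (psie t))
    (j := fun ρ => ((psie t).trans ρ).trans (psie t).symm)
  · intro π hπ
    simp only [Finset.mem_filter, Finset.mem_univ, true_and] at hπ ⊢
    intro k hk
    simp only [Equiv.trans_apply] at hk
    have : π ((psie t).symm k) = (psie t).symm k := by
      apply (psie t).injective
      rw [hk]; simp
    have ht := hπ _ this
    have := (psi_lt_tcount_iff t ((psie t).symm k)).mpr ht
    rwa [show psi t ((psie t).symm k) = k from by rw [← psie_apply]; simp] at this
  · intro ρ hρ
    simp only [Finset.mem_filter, Finset.mem_univ, true_and] at hρ ⊢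
    intro v hv
    have h2 : ρ (psie t v) = psie t v := by
      have := congrArg (psie t) hv
      simpa [Equiv.trans_apply] using this
    have h3 := hρ _ h2
    rw [psie_apply] at h3
    exact (psi_lt_tcount_iff t v).mp h3
  · intro π _; ext v; simp
  · intro ρ _; ext v; simp
  · intro π hπ
    congr 1
    simp only [Finset.mem_filter, Finset.mem_univ, true_and] at hπ
    unfold cexc exc0
    rw [← card_filter_equiv (psie t)
      (fun k : Fin n => (k : ℕ) < ((((psie t).symm.trans π).trans (psie t)) k : ℕ))]
    refine congrArg Finset.card (Finset.filter_congr ?_)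
    intro j _
    simp only [Equiv.trans_apply, Equiv.symm_apply_apply]
    rw [psie_apply, psie_apply]
    rw [← Fin.lt_def]
    exact (psi_lt_iff t j (π j)).symm
end Chunk3

section Chunk4
variable {n : ℕ}

lemma dpoly_eq (m : ℕ) (x : ℝ) :
    dpoly m x = ∑ τ ∈ (univ : Finset (Equiv.Perm (Fin m))).filter
      (fun τ => fixset τ = ∅), x ^ exc0 τ := by
  unfold dpoly
  apply Finset.sum_congr
  · apply Finset.filter_congr
    intro τ _
    rw [fixNum_eq, Finset.card_eq_zero]
  · intro τ _; rw [excNum_eq]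

lemma fixset_mem_iff (ρ : Equiv.Perm (Fin n)) (v : Fin n) :
    v ∈ fixset ρ ↔ ρ v = v := by simp [fixset]

lemma fib (F : Finset (Fin n)) (x : ℝ) :
    ∑ ρ ∈ (univ : Finset (Equiv.Perm (Fin n))).filter (fun ρ => fixset ρ = F), x ^ exc0 ρ
      = dpoly (n - F.card) x := by
  classical
  rw [dpoly_eq]
  have hC : (Fᶜ : Finset (Fin n)).card = n - F.card := by
    rw [Finset.card_compl, Fintype.card_fin]
  set m := n - F.card with hm
  let eo := Fᶜ.orderIsoOfFin hC
  let ec : Fin m ≃ {v : Fin n // v ∈ Fᶜ} := eo.toEquiv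
  -- invariance fact
  have hinvf : ∀ (ρ : Equiv.Perm (Fin n)), fixset ρ = F →
      ∀ v : Fin n, v ∈ Fᶜ ↔ ρ v ∈ Fᶜ := by
    intro ρ hρ v
    have h1 : ∀ w : Fin n, w ∈ F ↔ ρ w = w := by
      intro w; rw [← hρ, fixset_mem_iff]
    simp only [Finset.mem_compl, h1]
    constructor
    · intro hv hc
      exact hv (ρ.injective hc)
    · intro hv hc
      rw [hc] at hv; exact hv hc
  apply Finset.sum_nbij'
    (i := fun ρ => if h : ∀ v : Fin n, v ∈ Fᶜ ↔ ρ v ∈ Fᶜ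
      then ec.symm.permCongr (ρ.subtypePerm (fun v => (h v).symm)) else 1)
    (j := fun τ => Equiv.Perm.ofSubtype (ec.permCongr τ))
  · -- hi : maps into target
    intro ρ hρ
    simp only [Finset.mem_filter, Finset.mem_univ, true_and] at hρ ⊢
    rw [dif_pos (hinvf ρ hρ)]
    rw [Finset.eq_empty_iff_forall_notMem]
    intro a ha
    rw [fixset_mem_iff] at ha
    have : (ρ.subtypePerm (fun v => (hinvf ρ hρ v).symm)) (ec a) = ec a := by
      have := congrArg ec ha
      simpa [Equiv.permCongr_apply] using this
    have h2 : ρ ((ec a) : Fin n) = ((ec a) : Fin n) := congrArg Subtype.val this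
    have h3 : ((ec a) : Fin n) ∈ F := by
      have h5 : ((ec a) : Fin n) ∈ fixset ρ := (fixset_mem_iff ρ _).mpr h2
      rwa [hρ] at h5
    have h4 := (ec a).2
    rw [Finset.mem_compl] at h4
    exact h4 h3
  · -- hj
    intro τ hτ
    simp only [Finset.mem_filter, Finset.mem_univ, true_and] at hτ ⊢
    have hτ' : ∀ a, τ a ≠ a := by
      intro a ha
      have : a ∈ fixset τ := (fixset_mem_iff τ a).mpr ha
      rw [hτ] at this; exact absurd this (Finset.notMem_empty a)
    ext v
    rw [fixset_mem_iff]
    by_cases hv : v ∈ Fᶜ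
    · have happ := Equiv.Perm.ofSubtype_apply_of_mem (ec.permCongr τ) hv
      constructor
      · intro h
        rw [happ] at h
        have : (ec.permCongr τ) ⟨v, hv⟩ = ⟨v, hv⟩ := Subtype.ext h
        rw [Equiv.permCongr_apply] at this
        have h5 : τ (ec.symm ⟨v, hv⟩) = ec.symm ⟨v, hv⟩ := by
          apply ec.injective; simpa using this
        exact absurd h5 (hτ' _)
      · intro h
        rw [Finset.mem_compl] at hv; exact absurd h hv
    · have happ := Equiv.Perm.ofSubtype_apply_of_not_mem (ec.permCongr τ) hv
      rw [Finset.mem_compl, not_not] at hv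
      exact ⟨fun _ => hv, fun _ => happ⟩
  · -- left inverse
    intro ρ hρ
    simp only [Finset.mem_filter, Finset.mem_univ, true_and] at hρ
    rw [dif_pos (hinvf ρ hρ)]
    apply Equiv.ext
    intro v
    by_cases hv : v ∈ Fᶜ
    · rw [Equiv.Perm.ofSubtype_apply_of_mem _ hv]
      simp [Equiv.permCongr_apply, Equiv.Perm.subtypePerm_apply]
    · rw [Equiv.Perm.ofSubtype_apply_of_not_mem _ hv]
      rw [Finset.mem_compl, not_not] at hv
      rw [← hρ, fixset_mem_iff] at hv
      exact hv.symm
  · -- right inverse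
    intro τ hτ
    have hinv' : ∀ v : Fin n, v ∈ Fᶜ ↔ Equiv.Perm.ofSubtype (ec.permCongr τ) v ∈ Fᶜ := by
      intro v
      by_cases hv : v ∈ Fᶜ
      · rw [Equiv.Perm.ofSubtype_apply_of_mem _ hv]
        exact ⟨fun _ => ((ec.permCongr τ) ⟨v, hv⟩).2, fun _ => hv⟩
      · rw [Equiv.Perm.ofSubtype_apply_of_not_mem _ hv]
    rw [dif_pos hinv']
    apply Equiv.ext
    intro a
    have key : ((Equiv.Perm.ofSubtype (ec.permCongr τ)).subtypePerm (fun v => (hinv' v).symm)) (ec a) = ec (τ a) := by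
      apply Subtype.ext
      show Equiv.Perm.ofSubtype (ec.permCongr τ) ((ec a) : Fin n) = ((ec (τ a)) : Fin n)
      rw [Equiv.Perm.ofSubtype_apply_of_mem _ (ec a).2]
      rw [Equiv.permCongr_apply]
      simp
    show (ec.symm.permCongr ((Equiv.Perm.ofSubtype (ec.permCongr τ)).subtypePerm (fun v => (hinv' v).symm))) a = τ a
    rw [Equiv.permCongr_apply, Equiv.symm_symm, key, Equiv.symm_apply_apply]
  · -- values
    intro ρ hρ
    simp only [Finset.mem_filter, Finset.mem_univ, true_and] at hρ
    congr 1
    rw [dif_pos (hinvf ρ hρ)]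
    unfold exc0
    apply Finset.card_bij (fun (v : Fin n) hv => ec.symm ⟨v, by
      have h1 := (Finset.mem_filter.mp hv).2
      rw [Finset.mem_compl, ← hρ, fixset_mem_iff]
      intro h; rw [h] at h1; omega⟩)
    · intro v hv
      have h1 := (Finset.mem_filter.mp hv).2
      simp only [Finset.mem_filter, Finset.mem_univ, true_and]
      set a := ec.symm ⟨v, _⟩ with ha
      show (a : ℕ) < _
      have hlt : ∀ b c : Fin m, (b : ℕ) < (c : ℕ) ↔ ((ec b : Fin n) : ℕ) < ((ec c : Fin n) : ℕ) := by
        intro b c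
        rw [← Fin.lt_def]
        rw [show (b < c) ↔ eo b < eo c from (eo.lt_iff_lt).symm]
        rw [show (eo b < eo c) ↔ ((eo b : Fin n) < (eo c : Fin n)) from Subtype.coe_lt_coe.symm]
        rw [Fin.lt_def]
        rfl
      rw [hlt]
      have e1 : (ec a : Fin n) = v := by rw [ha]; simp
      have e2 : (ec (ec.symm.permCongr (ρ.subtypePerm (fun v => (hinvf ρ hρ v).symm)) a) : Fin n) = ρ v := by
        rw [Equiv.permCongr_apply]
        simp only [Equiv.symm_symm, Equiv.apply_symm_apply]
        rw [ha]
        simp [Equiv.Perm.subtypePerm_apply]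
      rw [e1, e2]
      exact h1
    · intro v hv w hw h
      have := congrArg (fun z => ((ec z : Fin n))) h
      simpa using this
    · intro a ha
      refine ⟨(ec a : Fin n), ?_, by simp⟩
      simp only [Finset.mem_filter, Finset.mem_univ, true_and] at ha ⊢
      have hlt : ∀ b c : Fin m, (b : ℕ) < (c : ℕ) ↔ ((ec b : Fin n) : ℕ) < ((ec c : Fin n) : ℕ) := by
        intro b c
        rw [← Fin.lt_def]
        rw [show (b < c) ↔ eo b < eo c from (eo.lt_iff_lt).symm]
        rw [show (eo b < eo c) ↔ ((eo b : Fin n) < (eo c : Fin n)) from Subtype.coe_lt_coe.symm]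
        rw [Fin.lt_def]
        rfl
      rw [hlt] at ha
      have e2 : (ec (ec.symm.permCongr (ρ.subtypePerm (fun v => (hinvf ρ hρ v).symm)) a) : Fin n) = ρ (ec a : Fin n) := by
        rw [Equiv.permCongr_apply]
        simp [Equiv.Perm.subtypePerm_apply]
      rw [e2] at ha
      exact ha

lemma stepD (x : ℝ) {n i : ℕ} (hi : i ≤ n) :
    Epoly n i x = ∑ j ∈ Finset.range (i + 1), (i.choose j : ℝ) * dpoly (n - j) x := by
  unfold Epoly
  set firstI := (univ : Finset (Fin n)).filter (fun k : Fin n => (k : ℕ) < i) with hfirst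
  have hcard : firstI.card = i := card_filter_fin_lt hi
  set s := (univ : Finset (Equiv.Perm (Fin n))).filter
      (fun ρ => ∀ k : Fin n, ρ k = k → (k : ℕ) < i) with hs
  have hmaps : ∀ ρ ∈ s, fixset ρ ∈ firstI.powerset := by
    intro ρ hρ
    rw [Finset.mem_powerset]
    intro v hv
    rw [fixset_mem_iff] at hv
    rw [hfirst, Finset.mem_filter]
    exact ⟨Finset.mem_univ v, (Finset.mem_filter.mp hρ).2 v hv⟩
  rw [← Finset.sum_fiberwise_of_maps_to hmaps (fun ρ => x ^ exc0 ρ)]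
  have hfib : ∀ F ∈ firstI.powerset,
      ∑ ρ ∈ s.filter (fun ρ => fixset ρ = F), x ^ exc0 ρ = dpoly (n - F.card) x := by
    intro F hF
    rw [Finset.mem_powerset] at hF
    rw [show s.filter (fun ρ => fixset ρ = F)
        = (univ : Finset (Equiv.Perm (Fin n))).filter (fun ρ => fixset ρ = F) from ?_]
    · exact fib F x
    · ext ρ
      simp only [Finset.mem_filter, Finset.mem_univ, true_and, hs]
      constructor
      · rintro ⟨_, h2⟩; exact h2
      · intro h2
        refine ⟨fun k hk => ?_, h2⟩
        have : k ∈ F := by rw [← h2, fixset_mem_iff]; exact hk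
        have := hF this
        rw [hfirst, Finset.mem_filter] at this
        exact this.2
  rw [Finset.sum_congr rfl hfib]
  rw [Finset.sum_powerset_apply_card (fun j => dpoly (n - j) x)]
  rw [hcard]
  apply Finset.sum_congr rfl
  intro j _
  rw [nsmul_eq_mul]

end Chunk4

section Chunk5

lemma stepA (n : ℕ) (x q : ℝ) :
    dBq n x q = ∑ p ∈ (univ : Finset ((Fin n → Bool) × Equiv.Perm (Fin n))).filter
        (fun p => ∀ i, p.2 i = i → p.1 i = true),
      x ^ cexc p.1 p.2 * q ^ tcount p.1 := by
  unfold dBq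
  symm
  apply Finset.sum_bij (fun p _ => bmk p.1 p.2)
  · intro p hp
    refine Finset.mem_filter.mpr ⟨bmk_mem p.1 p.2, (bfix_bmk p.1 p.2).mpr ?_⟩
    exact (Finset.mem_filter.mp hp).2
  · intro p1 h1 p2 h2 h
    have hπ : p1.2 = p2.2 := by
      apply Equiv.ext; intro i
      exact congrArg Prod.fst (congrFun h i)
    have ht : p1.1 = p2.1 := by
      funext v
      have h5 := congrArg Prod.snd (congrFun h (p1.2.symm v))
      simp only [bmk] at h5
      rw [hπ, Equiv.apply_symm_apply] at h5
      exact h5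
    exact Prod.ext ht hπ
  · intro σ hσ
    have hmem := Finset.mem_filter.mp hσ
    have hinj : Function.Injective (fun i => (σ i).1) := by
      have := Finset.mem_filter.mp hmem.1
      simpa [BPerms] using this.2
    let π : Equiv.Perm (Fin n) := Equiv.ofBijective (fun i => (σ i).1)
      (Finite.injective_iff_bijective.mp hinj)
    let t : Fin n → Bool := fun v => (σ (π.symm v)).2
    have hbmk : bmk t π = σ := by
      funext i
      show (π i, t (π i)) = σ i
      have h2 : t (π i) = (σ i).2 := by
        show (σ (π.symm (π i))).2 = (σ i).2
        rw [Equiv.symm_apply_apply]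
      rw [Prod.ext_iff]
      exact ⟨rfl, h2⟩
    refine ⟨(t, π), ?_, hbmk⟩
    refine Finset.mem_filter.mpr ⟨Finset.mem_univ _, ?_⟩
    show ∀ i, π i = i → t i = true
    apply (bfix_bmk t π).mp
    rw [hbmk]
    exact hmem.2
  · intro p hp
    rw [bexc_bmk, bneg_bmk]
    rfl

lemma pairs_sum (n : ℕ) (x q : ℝ) :
    ∑ p ∈ (univ : Finset ((Fin n → Bool) × Equiv.Perm (Fin n))).filter
        (fun p => ∀ i, p.2 i = i → p.1 i = true),
      x ^ cexc p.1 p.2 * q ^ tcount p.1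
    = ∑ t : Fin n → Bool, q ^ tcount t * Epoly n (tcount t) x := by
  rw [Finset.sum_filter, Fintype.sum_prod_type]
  apply Finset.sum_congr rfl
  intro t _
  rw [← Finset.sum_filter]
  show ∑ π ∈ (univ : Finset (Equiv.Perm (Fin n))).filter
      (fun π => ∀ i, π i = i → t i = true), x ^ cexc t π * q ^ tcount t
    = q ^ tcount t * Epoly n (tcount t) x
  rw [← Finset.sum_mul, stepB t x, mul_comm]

lemma group_t (n : ℕ) (f : ℕ → ℝ) :
    ∑ t : Fin n → Bool, f (tcount t)
      = ∑ i ∈ Finset.range (n + 1), (n.choose i : ℝ) * f i := by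
  have h1 : ∑ t : Fin n → Bool, f (tcount t)
      = ∑ T ∈ (univ : Finset (Fin n)).powerset, f T.card := by
    apply Finset.sum_nbij' (i := fun t => (univ : Finset (Fin n)).filter (fun v => t v = true))
      (j := fun T => fun v => decide (v ∈ T))
    · intro t _; exact Finset.mem_powerset.mpr (Finset.filter_subset _ _)
    · intro T _; exact Finset.mem_univ _
    · intro t _; funext v; simp
    · intro T _; ext v; simp
    · intro t _; rfl
  rw [h1, Finset.sum_powerset_apply_card f, Finset.card_univ, Fintype.card_fin]
  apply Finset.sum_congr rfl
  intro i _
  rw [nsmul_eq_mul]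

end Chunk5


theorem stmt18 : ∀ n : ℕ, ∀ x q : ℝ,
    dBq n x q = ∑ i ∈ Finset.range (n + 1), ∑ j ∈ Finset.range (i + 1),
      (n.choose i : ℝ) * (i.choose j : ℝ) * dpoly (n - j) x * q ^ i := by
  intro n x q
  rw [stepA n x q, pairs_sum n x q]
  rw [group_t n (fun i => q ^ i * Epoly n i x)]
  apply Finset.sum_congr rfl
  intro i hi
  have hin : i ≤ n := by
    rw [Finset.mem_range] at hi; omega
  rw [stepD x hin]
  rw [Finset.mul_sum, Finset.mul_sum]
  apply Finset.sum_congr rfl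
  intro j _
  ring

end
end
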